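/- arXiv:1403.7263 — 7 statements merged into one kernel-verified Lean document; each statement's English description precedes it below -/
import Mathlib

section
/- In Fourier transform coordinates, the forward derivative operator D on the p-adic tree satisfies (Df_n)^(k) = p^n (f̂_n(k) − f̂_{n+1}(pk)) for all 0 ≤ k < p^n, where Df_n(l) = p^n ( f_n(l) − (1/p) Σ_{j=0}^{p−1} f_{n+1}(l + j p^n) ). -/
/-!
The tree derivative averages `f_{n+1}` over the `p` lifts `l + j pⁿ` of `l`. Summing a function
on `ℤ/pⁿ⁺¹` over these fibres and then pairing with the characters of `ℤ/pⁿ` is the same as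
pairing it with the characters of `ℤ/pⁿ⁺¹` at frequencies divisible by `p`, since those are
constant on the fibres. Hence the Fourier transform of the fibre average at `k` is
`f̂_{n+1}(pk)`, and the claim follows by linearity.
-/

open Finset Complex

/-- The paper's `f̂`, with a function on `ℤ/Nℤ` represented by its values at `0, …, N - 1`. -/
noncomputable def dft (N : ℕ) (g : ℕ → ℂ) (k : ℕ) : ℂ :=
  (N : ℂ)⁻¹ * ∑ l ∈ range N, g l * exp (-(2 * Real.pi * I) * (l : ℂ) * (k : ℂ) / (N : ℂ))

theorem dft_const_mul (N : ℕ) (c : ℂ) (g : ℕ → ℂ) (k : ℕ) :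
    dft N (fun l => c * g l) k = c * dft N g k := by
  simp only [dft, mul_assoc, ← mul_sum]
  ring

theorem dft_sub (N : ℕ) (g h : ℕ → ℂ) (k : ℕ) :
    dft N (fun l => g l - h l) k = dft N g k - dft N h k := by
  simp only [dft, sub_mul, sum_sub_distrib, mul_sub]

theorem Finset.sum_range_mul_eq_sum_range_sum_range {β : Type*} [AddCommMonoid β]
    (g : ℕ → β) (M N : ℕ) :
    ∑ m ∈ range (M * N), g m = ∑ l ∈ range N, ∑ j ∈ range M, g (l + j * N) := by
  induction M with
  | zero => simp
  | succ M ih =>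
    rw [Nat.succ_mul, sum_range_add, ih]
    simp only [sum_range_succ, sum_add_distrib, add_comm]

theorem exp_neg_two_pi_I_mul_add_mul_div {N M : ℕ} (hN : N ≠ 0) (hM : M ≠ 0) (l j k : ℕ) :
    exp (-(2 * Real.pi * I) * ((l + j * N : ℕ) : ℂ) * ((M * k : ℕ) : ℂ) / ((M * N : ℕ) : ℂ))
      = exp (-(2 * Real.pi * I) * (l : ℂ) * (k : ℂ) / (N : ℂ)) := by
  have hexponent :
      -(2 * Real.pi * I) * ((l + j * N : ℕ) : ℂ) * ((M * k : ℕ) : ℂ) / ((M * N : ℕ) : ℂ)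
        = -(2 * Real.pi * I) * (l : ℂ) * (k : ℂ) / (N : ℂ)
          - ((j * k : ℕ) : ℂ) * (2 * Real.pi * I) := by
    push_cast
    field_simp
    ring
  rw [hexponent, exp_sub, exp_nat_mul_two_pi_mul_I, div_one]

theorem dft_sum_fiber (N M : ℕ) (g : ℕ → ℂ) (k : ℕ) :
    dft N (fun l => ∑ j ∈ range M, g (l + j * N)) k = M * dft (M * N) g (M * k) := by
  have hsum : ∑ l ∈ range N, (∑ j ∈ range M, g (l + j * N)) *
        exp (-(2 * Real.pi * I) * (l : ℂ) * (k : ℂ) / (N : ℂ))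
      = ∑ m ∈ range (M * N), g m *
        exp (-(2 * Real.pi * I) * (m : ℂ) * ((M * k : ℕ) : ℂ) / ((M * N : ℕ) : ℂ)) := by
    rw [sum_range_mul_eq_sum_range_sum_range]
    refine sum_congr rfl fun l hl => ?_
    rw [sum_mul]
    refine sum_congr rfl fun j hj => ?_
    rw [exp_neg_two_pi_I_mul_add_mul_div (by grind) (by grind)]
  rcases eq_or_ne M 0 with rfl | hM
  · simp [dft]
  · simp only [dft, hsum, Nat.cast_mul, mul_inv, ← mul_assoc]
    rw [mul_inv_cancel₀ (Nat.cast_ne_zero.mpr hM), one_mul]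

theorem dft_scaled_sub_fiber_average (N : ℕ) {M : ℕ} (hM : M ≠ 0) (f₀ f₁ : ℕ → ℂ) (k : ℕ) :
    dft N (fun l => N * (f₀ l - (M : ℂ)⁻¹ * ∑ j ∈ range M, f₁ (l + j * N))) k
      = N * (dft N f₀ k - dft (M * N) f₁ (M * k)) := by
  rw [dft_const_mul, dft_sub, dft_const_mul, dft_sum_fiber, ← mul_assoc,
    inv_mul_cancel₀ (Nat.cast_ne_zero.mpr hM), one_mul]

/-- In Fourier coordinates the forward derivative `D` on the `p`-adic tree satisfies
`(Df_n)^(k) = p^n (f̂_n(k) - f̂_{n+1}(pk))`. -/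
theorem stmt6 (p : ℕ) (hp : p.Prime) (f F : ℕ → ℕ → ℂ)
    (hF : ∀ n l, F n l = ((p : ℂ) ^ n)⁻¹ * ∑ k ∈ Finset.range (p ^ n),
        f n k * Complex.exp (-(2 * Real.pi * Complex.I) * (k : ℂ) * (l : ℂ) / ((p : ℂ) ^ n))) :
    ∀ n k, k < p ^ n →
      ((p : ℂ) ^ n)⁻¹ * ∑ l ∈ Finset.range (p ^ n),
          ((p : ℂ) ^ n * (f n l - (p : ℂ)⁻¹ * ∑ j ∈ Finset.range p, f (n + 1) (l + j * p ^ n))) *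
            Complex.exp (-(2 * Real.pi * Complex.I) * (l : ℂ) * (k : ℂ) / ((p : ℂ) ^ n))
        = (p : ℂ) ^ n * (F n k - F (n + 1) (p * k)) := by
  intro n k _
  have hF_dft : ∀ n l, F n l = dft (p ^ n) (f n) l := by
    intro n l
    simp only [hF, dft, Nat.cast_pow]
  have h := dft_scaled_sub_fiber_average (p ^ n) hp.ne_zero (f n) (f (n + 1)) k
  rw [← pow_succ'] at h
  simpa only [hF_dft, dft, Nat.cast_pow] using h
end

section
/- The kernel of the operator D̂ on the maximal domain in ℓ² is trivial: if f̂ = (f̂_n) with f̂_n : Z/p^nZ → ℂ satisfies f̂_n(k) = f̂_{n+1}(pk) for all n, k, and Σ_n Σ_{0≤k<p^n} |f̂_n(k)|² < ∞, then f̂ ≡ 0. -/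
open Filter Function Topology

/-!
Iterating the recursion shows that `f` takes the value `f n k` at every point `(n + m, p ^ m * k)`
of an injective orbit in the index set; a summable family tends to zero along any injective
sequence, so `‖f n k‖ ^ 2 = 0`.
-/

theorem Summable.eq_zero_of_injective_of_forall_eq {α β G : Type*} [Infinite β]
    [AddCommGroup G] [TopologicalSpace G] [IsTopologicalAddGroup G] [T2Space G]
    {f : α → G} (hf : Summable f) {g : β → α} (hg : Injective g) {c : G}
    (hc : ∀ b, f (g b) = c) : c = 0 := by
  have hlim : Tendsto (f ∘ g) cofinite (𝓝 0) :=
    hf.tendsto_cofinite_zero.comp hg.tendsto_cofinite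
  rw [show f ∘ g = fun _ ↦ c from funext hc] at hlim
  exact tendsto_nhds_unique tendsto_const_nhds hlim

theorem pow_mul_lt_pow_add {p n k : ℕ} (hp : 0 < p) (hk : k < p ^ n) (m : ℕ) :
    p ^ m * k < p ^ (n + m) := by
  rw [pow_add, mul_comm (p ^ n)]
  exact Nat.mul_lt_mul_of_pos_left hk (pow_pos hp m)

theorem apply_pow_mul_eq_of_forall_apply_mul_eq {γ : Type*} {p : ℕ} (hp : 0 < p)
    {f : ℕ → ℕ → γ} (hker : ∀ n k, k < p ^ n → f n k = f (n + 1) (p * k)) {n k : ℕ}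
    (hk : k < p ^ n) (m : ℕ) : f (n + m) (p ^ m * k) = f n k := by
  induction m with
  | zero => simp
  | succ m ih =>
    rw [← ih, hker _ _ (pow_mul_lt_pow_add hp hk m), pow_succ', mul_assoc, add_assoc]

/-- The kernel of the operator `D̂` on its maximal domain in `ℓ²` is trivial. -/
theorem stmt7 (p : ℕ) (hp : p.Prime) (f : ℕ → ℕ → ℂ)
    (hker : ∀ n k, k < p ^ n → f n k = f (n + 1) (p * k))
    (hsum : Summable (fun x : Σ n : ℕ, Fin (p ^ n) => ‖f x.1 (x.2 : ℕ)‖ ^ 2)) :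
    ∀ n k, k < p ^ n → f n k = 0 := by
  intro n k hk
  let orbit (m : ℕ) : Σ n : ℕ, Fin (p ^ n) :=
    ⟨n + m, p ^ m * k, pow_mul_lt_pow_add hp.pos hk m⟩
  have orbit_injective : Injective orbit := fun a b h ↦ by
    simpa [orbit] using congrArg Sigma.fst h
  have hzero : ‖f n k‖ ^ 2 = 0 := hsum.eq_zero_of_injective_of_forall_eq orbit_injective
    fun m ↦ by rw [apply_pow_mul_eq_of_forall_apply_mul_eq hp.pos hker hk m]
  simpa using hzero
end

section
/- The operator D̂ defined by D̂f̂_n(k) = p^n (f̂_n(k) − f̂_{n+1}(pk)) on its maximal ℓ² domain has a bounded inverse, with operator norm of the inverse at most ((1−p^{−2})(1−p^{−1}))^{−1/2}. -/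
/-- The successor index `p·k` viewed in level `n+1` of the `p`-adic tree. -/
def padicIdx (p n : ℕ) (hp : 0 < p) (k : Fin (p ^ n)) : Fin (p ^ (n + 1)) :=
  ⟨p * (k : ℕ), by
    calc p * (k : ℕ) < p * p ^ n := (Nat.mul_lt_mul_left hp).mpr k.2
      _ = p ^ (n + 1) := by ring⟩

namespace Stmt9Aux

open Function Filter

/-- The index `pⁱ·k` viewed in level `n+i` of the `p`-adic tree. -/
def chainIdx (p : ℕ) (hp : 0 < p) (n i : ℕ) (k : Fin (p ^ n)) : Fin (p ^ (n + i)) :=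
  ⟨p ^ i * (k : ℕ), by
    calc p ^ i * (k : ℕ) < p ^ i * p ^ n := (Nat.mul_lt_mul_left (pow_pos hp i)).mpr k.2
      _ = p ^ (n + i) := by rw [← pow_add, Nat.add_comm]⟩

/-- Congruence lemma across levels. -/
theorem apply_congr {p : ℕ} (g : ∀ n : ℕ, Fin (p ^ n) → ℂ) {m m' : ℕ} (h : m = m')
    {k : Fin (p ^ m)} {k' : Fin (p ^ m')} (hk : (k : ℕ) = (k' : ℕ)) : g m k = g m' k' := by
  subst h
  congr 1
  exact Fin.ext hk

/-- The chain map into the sigma type. -/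
def chainMap (p : ℕ) (hp : 0 < p) (n : ℕ) (k : Fin (p ^ n)) (i : ℕ) :
    Σ m : ℕ, Fin (p ^ m) :=
  ⟨n + i, chainIdx p hp n i k⟩

theorem chainMap_injective (p : ℕ) (hp : 0 < p) (n : ℕ) (k : Fin (p ^ n)) :
    Injective (chainMap p hp n k) := by
  intro i j h
  have := congrArg Sigma.fst h
  simpa [chainMap] using this

/-- Cauchy–Schwarz inequality for infinite sums of nonnegative reals. -/
theorem tsum_cs {a b : ℕ → ℝ} (ha : ∀ i, 0 ≤ a i) (hb : ∀ i, 0 ≤ b i)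
    (ha2 : Summable fun i => a i ^ 2) (hb2 : Summable fun i => b i ^ 2) :
    (∑' i, a i * b i) ^ 2 ≤ (∑' i, a i ^ 2) * ∑' i, b i ^ 2 := by
  have hab : Summable fun i => a i * b i := by
    refine Summable.of_nonneg_of_le (fun i => mul_nonneg (ha i) (hb i)) (fun i => ?_)
      (ha2.add hb2)
    nlinarith [sq_nonneg (a i - b i), mul_nonneg (ha i) (hb i)]
  have hA : 0 ≤ ∑' i, a i ^ 2 := tsum_nonneg fun i => sq_nonneg _
  have hB : 0 ≤ ∑' i, b i ^ 2 := tsum_nonneg fun i => sq_nonneg _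
  have key : ∑' i, a i * b i ≤ Real.sqrt ((∑' i, a i ^ 2) * ∑' i, b i ^ 2) := by
    refine Summable.tsum_le_of_sum_le hab fun s => ?_
    rw [Real.le_sqrt (Finset.sum_nonneg fun i _ => mul_nonneg (ha i) (hb i))
      (mul_nonneg hA hB)]
    calc (∑ i ∈ s, a i * b i) ^ 2 ≤ (∑ i ∈ s, a i ^ 2) * ∑ i ∈ s, b i ^ 2 :=
          Finset.sum_mul_sq_le_sq_mul_sq s a b
      _ ≤ (∑' i, a i ^ 2) * ∑' i, b i ^ 2 := by
          refine mul_le_mul (Summable.sum_le_tsum s (fun i _ => sq_nonneg _) ha2)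
            (Summable.sum_le_tsum s (fun i _ => sq_nonneg _) hb2)
            (Finset.sum_nonneg fun i _ => sq_nonneg _) hA
  calc (∑' i, a i * b i) ^ 2
      ≤ Real.sqrt ((∑' i, a i ^ 2) * ∑' i, b i ^ 2) ^ 2 :=
        pow_le_pow_left₀ (tsum_nonneg fun i => mul_nonneg (ha i) (hb i)) key 2
    _ = (∑' i, a i ^ 2) * ∑' i, b i ^ 2 := Real.sq_sqrt (mul_nonneg hA hB)

section Main

variable {p : ℕ} (hp : 0 < p) (g : ∀ n : ℕ, Fin (p ^ n) → ℂ)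

/-- The `i`-th term of the inverse series. -/
noncomputable def term (n : ℕ) (k : Fin (p ^ n)) (i : ℕ) : ℂ :=
  g (n + i) (chainIdx p hp n i k) / (p : ℂ) ^ (n + i)

/-- The candidate solution `f n k = ∑ᵢ g_{n+i}(pⁱ k)/p^{n+i}`. -/
noncomputable def sol (n : ℕ) (k : Fin (p ^ n)) : ℂ :=
  ∑' i : ℕ, term hp g n k i

variable (hg : Summable (fun x : Σ n : ℕ, Fin (p ^ n) => ‖g x.1 x.2‖ ^ 2))

include hg in
theorem summable_sq_chain (n : ℕ) (k : Fin (p ^ n)) :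
    Summable fun i => ‖g (n + i) (chainIdx p hp n i k)‖ ^ 2 := by
  have h := hg.comp_injective (chainMap_injective p hp n k)
  exact h.congr fun i => rfl

theorem norm_term_eq (n : ℕ) (k : Fin (p ^ n)) (i : ℕ) :
    ‖term hp g n k i‖ = ‖g (n + i) (chainIdx p hp n i k)‖ * ((p : ℝ)⁻¹) ^ (n + i) := by
  rw [term, norm_div, norm_pow, Complex.norm_natCast, div_eq_mul_inv, ← inv_pow]

theorem r_nonneg : (0 : ℝ) ≤ (p : ℝ)⁻¹ := inv_nonneg.2 (Nat.cast_nonneg p)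

theorem r_lt_one (hp1 : 1 < p) : (p : ℝ)⁻¹ < 1 := by
  have h1 : (1 : ℝ) < p := by exact_mod_cast hp1
  rw [inv_lt_one_iff₀]
  right; exact h1

variable (hp1 : 1 < p)

include hg hp1 in
theorem summable_norm_term (n : ℕ) (k : Fin (p ^ n)) :
    Summable fun i => ‖term hp g n k i‖ := by
  set C : ℝ := Real.sqrt (∑' x : Σ n : ℕ, Fin (p ^ n), ‖g x.1 x.2‖ ^ 2) with hC
  have hCup : ∀ m (x : Fin (p ^ m)), ‖g m x‖ ≤ C := by
    intro m x
    rw [hC, Real.le_sqrt (norm_nonneg _) (tsum_nonneg fun _ => sq_nonneg _)]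
    exact Summable.le_tsum hg ⟨m, x⟩ fun j _ => sq_nonneg _
  refine Summable.of_nonneg_of_le (fun i => norm_nonneg _) (fun i => ?_)
    (((summable_geometric_of_lt_one (r_nonneg (p := p)) (r_lt_one hp1)).mul_left
      (C * ((p : ℝ)⁻¹) ^ n)))
  rw [norm_term_eq]
  calc ‖g (n + i) (chainIdx p hp n i k)‖ * ((p : ℝ)⁻¹) ^ (n + i)
      ≤ C * ((p : ℝ)⁻¹) ^ (n + i) := by
        exact mul_le_mul_of_nonneg_right (hCup _ _) (pow_nonneg (r_nonneg) _)
    _ = C * ((p : ℝ)⁻¹) ^ n * ((p : ℝ)⁻¹) ^ i := by rw [pow_add]; ring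

include hg hp1 in
theorem summable_term (n : ℕ) (k : Fin (p ^ n)) :
    Summable fun i => term hp g n k i :=
  (summable_norm_term hp g hg hp1 n k).of_norm

include hg hp1 in
/-- The recurrence `p^n (f_n(k) - f_{n+1}(pk)) = g_n(k)`. -/
theorem sol_rec (n : ℕ) (k : Fin (p ^ n)) :
    (p : ℂ) ^ n * (sol hp g n k - sol hp g (n + 1) (padicIdx p n hp k)) = g n k := by
  have hsum := summable_term hp g hg hp1 n k
  have h0 : sol hp g n k = term hp g n k 0 + ∑' i, term hp g n k (i + 1) :=
    Summable.tsum_eq_zero_add hsum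
  have hshift : sol hp g (n + 1) (padicIdx p n hp k) = ∑' i, term hp g n k (i + 1) := by
    refine tsum_congr fun i => ?_
    show g ((n + 1) + i) (chainIdx p hp (n + 1) i (padicIdx p n hp k)) / (p : ℂ) ^ ((n + 1) + i)
      = g (n + (i + 1)) (chainIdx p hp n (i + 1) k) / (p : ℂ) ^ (n + (i + 1))
    have hm : (n + 1) + i = n + (i + 1) := by omega
    have hval : ((chainIdx p hp (n + 1) i (padicIdx p n hp k) : Fin (p ^ ((n + 1) + i))) : ℕ)
        = ((chainIdx p hp n (i + 1) k : Fin (p ^ (n + (i + 1)))) : ℕ) := by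
      show p ^ i * (p * (k : ℕ)) = p ^ (i + 1) * (k : ℕ)
      rw [pow_succ]; ring
    rw [apply_congr g hm hval, hm]
  have hterm0 : term hp g n k 0 = g n k / (p : ℂ) ^ n := by
    show g (n + 0) (chainIdx p hp n 0 k) / (p : ℂ) ^ (n + 0) = g n k / (p : ℂ) ^ n
    have : (chainIdx p hp n 0 k : ℕ) = (k : ℕ) := by
      show p ^ 0 * (k : ℕ) = (k : ℕ)
      simp
    rw [apply_congr g (Nat.add_zero n) this, Nat.add_zero]
  have hpn : ((p : ℂ)) ^ n ≠ 0 := pow_ne_zero _ (by exact_mod_cast hp.ne')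
  rw [h0, hshift, hterm0]
  field_simp
  ring

include hg hp1 in
/-- Pointwise Cauchy–Schwarz bound along the chain. -/
theorem sol_sq_le (n : ℕ) (k : Fin (p ^ n)) :
    ‖sol hp g n k‖ ^ 2 ≤ (1 - ((p : ℝ)⁻¹) ^ 2)⁻¹ *
      ((((p : ℝ)⁻¹) ^ 2) ^ n * ∑' i, ‖g (n + i) (chainIdx p hp n i k)‖ ^ 2) := by
  set r : ℝ := (p : ℝ)⁻¹ with hrdef
  have hr0 : 0 ≤ r := r_nonneg
  have hr1 : r < 1 := r_lt_one hp1
  have hr20 : 0 ≤ r ^ 2 := sq_nonneg r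
  have hr21 : r ^ 2 < 1 := by nlinarith
  have h1 : ‖sol hp g n k‖ ≤ ∑' i, ‖term hp g n k i‖ :=
    norm_tsum_le_tsum_norm (summable_norm_term hp g hg hp1 n k)
  have h2 : (∑' i, ‖term hp g n k i‖)
      = ∑' i, ‖g (n + i) (chainIdx p hp n i k)‖ * r ^ (n + i) :=
    tsum_congr fun i => norm_term_eq hp g n k i
  have hb2 : Summable fun i => (r ^ (n + i)) ^ 2 := by
    have : Summable fun i => (r ^ 2) ^ n * (r ^ 2) ^ i :=
      (summable_geometric_of_lt_one hr20 hr21).mul_left _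
    refine this.congr fun i => ?_
    ring
  have hcs := tsum_cs (a := fun i => ‖g (n + i) (chainIdx p hp n i k)‖)
    (b := fun i => r ^ (n + i)) (fun i => norm_nonneg _) (fun i => pow_nonneg hr0 _)
    (summable_sq_chain hp g hg n k) hb2
  have hgeo : (∑' i, (r ^ (n + i)) ^ 2) = (r ^ 2) ^ n * (1 - r ^ 2)⁻¹ := by
    have : (∑' i, (r ^ (n + i)) ^ 2) = ∑' i, (r ^ 2) ^ n * (r ^ 2) ^ i := by
      refine tsum_congr fun i => ?_
      ring
    rw [this, tsum_mul_left, tsum_geometric_of_lt_one hr20 hr21]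
  have h3 : ‖sol hp g n k‖ ^ 2 ≤ (∑' i, ‖term hp g n k i‖) ^ 2 :=
    pow_le_pow_left₀ (norm_nonneg _) h1 2
  rw [h2] at h3
  calc ‖sol hp g n k‖ ^ 2
      ≤ (∑' i, ‖g (n + i) (chainIdx p hp n i k)‖ * r ^ (n + i)) ^ 2 := h3
    _ ≤ (∑' i, ‖g (n + i) (chainIdx p hp n i k)‖ ^ 2) * ∑' i, (r ^ (n + i)) ^ 2 := hcs
    _ = (1 - r ^ 2)⁻¹ * ((r ^ 2) ^ n * ∑' i, ‖g (n + i) (chainIdx p hp n i k)‖ ^ 2) := by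
        rw [hgeo]; ring

include hg hp1 in
set_option maxHeartbeats 1000000 in
/-- Global `ℓ²` bound for the solution. -/
theorem sol_l2 :
    Summable (fun x : Σ n : ℕ, Fin (p ^ n) => ‖sol hp g x.1 x.2‖ ^ 2) ∧
    (∑' x : Σ n : ℕ, Fin (p ^ n), ‖sol hp g x.1 x.2‖ ^ 2) ≤
      (1 - ((p : ℝ)⁻¹) ^ 2)⁻¹ * ((1 - ((p : ℝ)⁻¹) ^ 2)⁻¹ *
        ∑' x : Σ n : ℕ, Fin (p ^ n), ‖g x.1 x.2‖ ^ 2) := by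
  set r : ℝ := (p : ℝ)⁻¹ with hrdef
  have hr0 : 0 ≤ r := r_nonneg
  have hr1 : r < 1 := r_lt_one hp1
  have hr20 : 0 ≤ r ^ 2 := sq_nonneg r
  have hr21 : r ^ 2 < 1 := by nlinarith
  have hc1 : (0:ℝ) ≤ (1 - r ^ 2)⁻¹ := inv_nonneg.2 (by linarith)
  have hS0 : (0:ℝ) ≤ ∑' x : Σ n : ℕ, Fin (p ^ n), ‖g x.1 x.2‖ ^ 2 :=
    tsum_nonneg fun _ => sq_nonneg _
  set c1e : ENNReal := ENNReal.ofReal (1 - r ^ 2)⁻¹ with hc1e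
  -- main ENNReal estimate
  have Emain : (∑' x : Σ n : ℕ, Fin (p ^ n), ENNReal.ofReal (‖sol hp g x.1 x.2‖ ^ 2)) ≤
      ENNReal.ofReal ((1 - r ^ 2)⁻¹ * ((1 - r ^ 2)⁻¹ *
        ∑' x : Σ n : ℕ, Fin (p ^ n), ‖g x.1 x.2‖ ^ 2)) := by
    have step1 : (∑' x : Σ n : ℕ, Fin (p ^ n), ENNReal.ofReal (‖sol hp g x.1 x.2‖ ^ 2)) ≤
        c1e * ∑' x : Σ n : ℕ, Fin (p ^ n),
          ENNReal.ofReal ((r ^ 2) ^ x.1 *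
            ∑' i, ‖g (x.1 + i) (chainIdx p hp x.1 i x.2)‖ ^ 2) := by
      rw [← ENNReal.tsum_mul_left]
      refine ENNReal.tsum_le_tsum fun x => ?_
      rw [hc1e, ← ENNReal.ofReal_mul hc1]
      exact ENNReal.ofReal_le_ofReal (sol_sq_le hp g hg hp1 x.1 x.2)
    have step2 : ∀ x : Σ n : ℕ, Fin (p ^ n),
        ENNReal.ofReal ((r ^ 2) ^ x.1 *
          ∑' i, ‖g (x.1 + i) (chainIdx p hp x.1 i x.2)‖ ^ 2)
        = ∑' i, ENNReal.ofReal ((r ^ 2) ^ x.1 *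
            ‖g (x.1 + i) (chainIdx p hp x.1 i x.2)‖ ^ 2) := by
      intro x
      rw [← tsum_mul_left]
      exact ENNReal.ofReal_tsum_of_nonneg
        (fun i => mul_nonneg (pow_nonneg hr20 _) (sq_nonneg _))
        ((summable_sq_chain hp g hg x.1 x.2).mul_left _)
    have hprod3 : (∑' z : (Σ n : ℕ, Fin (p ^ n)) × ℕ,
          ENNReal.ofReal ((r ^ 2) ^ z.1.1 *
            ‖g (z.1.1 + z.2) (chainIdx p hp z.1.1 z.2 z.1.2)‖ ^ 2))
        = ∑' x : Σ n : ℕ, Fin (p ^ n), ∑' i : ℕ,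
            ENNReal.ofReal ((r ^ 2) ^ x.1 *
              ‖g (x.1 + i) (chainIdx p hp x.1 i x.2)‖ ^ 2) := by
      rw [ENNReal.tsum_prod']
    have hprod4 : (∑' w : (Σ n : ℕ, Fin (p ^ n)) × ℕ,
          ENNReal.ofReal ((r ^ 2) ^ w.2 * ‖g w.1.1 w.1.2‖ ^ 2))
        = ∑' x : Σ n : ℕ, Fin (p ^ n), ∑' m : ℕ,
            ENNReal.ofReal ((r ^ 2) ^ m * ‖g x.1 x.2‖ ^ 2) := by
      rw [ENNReal.tsum_prod']
    have step3 : (∑' x : Σ n : ℕ, Fin (p ^ n), ∑' i : ℕ,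
          ENNReal.ofReal ((r ^ 2) ^ x.1 *
            ‖g (x.1 + i) (chainIdx p hp x.1 i x.2)‖ ^ 2))
        ≤ ∑' w : (Σ n : ℕ, Fin (p ^ n)) × ℕ,
            ENNReal.ofReal ((r ^ 2) ^ w.2 * ‖g w.1.1 w.1.2‖ ^ 2) := by
      rw [← hprod3]
      set ψ : (Σ n : ℕ, Fin (p ^ n)) × ℕ → (Σ n : ℕ, Fin (p ^ n)) × ℕ :=
        fun z => (chainMap p hp z.1.1 z.1.2 z.2, z.1.1) with hψdef
      have hψ : Function.Injective ψ := by
        rintro ⟨⟨n1, k1⟩, i1⟩ ⟨⟨n2, k2⟩, i2⟩ h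
        simp only [hψdef, Prod.mk.injEq] at h
        obtain ⟨h1, h2⟩ := h
        subst h2
        have hfst := congrArg Sigma.fst h1
        have hi : i1 = i2 := by simpa [chainMap] using hfst
        subst hi
        have hval : (chainIdx p hp n1 i1 k1 : ℕ) = (chainIdx p hp n1 i1 k2 : ℕ) :=
          congrArg (fun s : Σ m : ℕ, Fin (p ^ m) => (s.2 : ℕ)) h1
        have hk : (k1 : ℕ) = (k2 : ℕ) :=
          Nat.eq_of_mul_eq_mul_left (pow_pos hp i1) hval
        have : k1 = k2 := Fin.ext hk
        subst this
        rfl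
      have := ENNReal.tsum_comp_le_tsum_of_injective hψ
        (fun w : (Σ n : ℕ, Fin (p ^ n)) × ℕ =>
          ENNReal.ofReal ((r ^ 2) ^ w.2 * ‖g w.1.1 w.1.2‖ ^ 2))
      exact le_trans (le_of_eq (tsum_congr fun z => rfl)) this
    have step4 : (∑' w : (Σ n : ℕ, Fin (p ^ n)) × ℕ,
          ENNReal.ofReal ((r ^ 2) ^ w.2 * ‖g w.1.1 w.1.2‖ ^ 2))
        = c1e * ∑' x : Σ n : ℕ, Fin (p ^ n), ENNReal.ofReal (‖g x.1 x.2‖ ^ 2) := by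
      have hprod : (∑' w : (Σ n : ℕ, Fin (p ^ n)) × ℕ,
            ENNReal.ofReal ((r ^ 2) ^ w.2 * ‖g w.1.1 w.1.2‖ ^ 2))
          = ∑' x : Σ n : ℕ, Fin (p ^ n), ∑' m : ℕ,
              ENNReal.ofReal ((r ^ 2) ^ m * ‖g x.1 x.2‖ ^ 2) := by
        rw [ENNReal.tsum_prod']
      rw [hprod, ← ENNReal.tsum_mul_left]
      refine tsum_congr fun x => ?_
      have hsumm : Summable fun m : ℕ => (r ^ 2) ^ m * ‖g x.1 x.2‖ ^ 2 :=
        (summable_geometric_of_lt_one hr20 hr21).mul_right _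
      rw [← ENNReal.ofReal_tsum_of_nonneg
        (fun m => mul_nonneg (pow_nonneg hr20 _) (sq_nonneg _)) hsumm]
      rw [tsum_mul_right, tsum_geometric_of_lt_one hr20 hr21]
      rw [hc1e, ← ENNReal.ofReal_mul hc1]
    calc (∑' x : Σ n : ℕ, Fin (p ^ n), ENNReal.ofReal (‖sol hp g x.1 x.2‖ ^ 2))
        ≤ c1e * ∑' x : Σ n : ℕ, Fin (p ^ n),
            ENNReal.ofReal ((r ^ 2) ^ x.1 *
              ∑' i, ‖g (x.1 + i) (chainIdx p hp x.1 i x.2)‖ ^ 2) := step1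
      _ = c1e * ∑' x : Σ n : ℕ, Fin (p ^ n), ∑' i : ℕ,
            ENNReal.ofReal ((r ^ 2) ^ x.1 *
              ‖g (x.1 + i) (chainIdx p hp x.1 i x.2)‖ ^ 2) := by
          rw [tsum_congr step2]
      _ ≤ c1e * ∑' w : (Σ n : ℕ, Fin (p ^ n)) × ℕ,
            ENNReal.ofReal ((r ^ 2) ^ w.2 * ‖g w.1.1 w.1.2‖ ^ 2) :=
          mul_le_mul_right step3 _
      _ = c1e * (c1e * ∑' x : Σ n : ℕ, Fin (p ^ n),
            ENNReal.ofReal (‖g x.1 x.2‖ ^ 2)) := by rw [step4]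
      _ = ENNReal.ofReal ((1 - r ^ 2)⁻¹ * ((1 - r ^ 2)⁻¹ *
            ∑' x : Σ n : ℕ, Fin (p ^ n), ‖g x.1 x.2‖ ^ 2)) := by
          rw [← ENNReal.ofReal_tsum_of_nonneg (fun _ => sq_nonneg _) hg,
            hc1e, ← ENNReal.ofReal_mul hc1, ← ENNReal.ofReal_mul hc1]
  have hne : (∑' x : Σ n : ℕ, Fin (p ^ n), ENNReal.ofReal (‖sol hp g x.1 x.2‖ ^ 2)) ≠ ⊤ :=
    (lt_of_le_of_lt Emain ENNReal.ofReal_lt_top).ne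
  -- summability
  have hcoe : ∀ x : Σ n : ℕ, Fin (p ^ n),
      ENNReal.ofReal (‖sol hp g x.1 x.2‖ ^ 2)
        = (((‖sol hp g x.1 x.2‖ ^ 2).toNNReal : NNReal) : ENNReal) := fun x => rfl
  have hFs : Summable (fun x : Σ n : ℕ, Fin (p ^ n) =>
      ((‖sol hp g x.1 x.2‖ ^ 2).toNNReal : NNReal)) := by
    refine ENNReal.tsum_coe_ne_top_iff_summable.mp ?_
    rw [← tsum_congr hcoe]
    exact hne
  have hsum : Summable (fun x : Σ n : ℕ, Fin (p ^ n) => ‖sol hp g x.1 x.2‖ ^ 2) := by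
    have h := NNReal.summable_coe.mpr hFs
    refine h.congr fun x => ?_
    exact Real.coe_toNNReal _ (sq_nonneg _)
  refine ⟨hsum, ?_⟩
  have hofeq : ENNReal.ofReal (∑' x : Σ n : ℕ, Fin (p ^ n), ‖sol hp g x.1 x.2‖ ^ 2)
      = ∑' x : Σ n : ℕ, Fin (p ^ n), ENNReal.ofReal (‖sol hp g x.1 x.2‖ ^ 2) :=
    ENNReal.ofReal_tsum_of_nonneg (fun _ => sq_nonneg _) hsum
  rw [← hofeq] at Emain
  exact (ENNReal.ofReal_le_ofReal_iff
    (mul_nonneg hc1 (mul_nonneg hc1 hS0))).mp Emain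

include hg hp1 in
set_option maxHeartbeats 1000000 in
/-- Uniqueness of the solution in `ℓ²`. -/
theorem sol_unique (f' : ∀ n : ℕ, Fin (p ^ n) → ℂ)
    (hf' : Summable (fun x : Σ n : ℕ, Fin (p ^ n) => ‖f' x.1 x.2‖ ^ 2))
    (hrec : ∀ n (k : Fin (p ^ n)),
      (p : ℂ) ^ n * (f' n k - f' (n + 1) (padicIdx p n hp k)) = g n k) :
    f' = sol hp g := by
  funext n k
  have hpm : ∀ m : ℕ, ((p : ℂ)) ^ m ≠ 0 := fun m =>
    pow_ne_zero _ (by exact_mod_cast hp.ne')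
  have hstep : ∀ m (κ : Fin (p ^ m)),
      f' m κ = g m κ / (p : ℂ) ^ m + f' (m + 1) (padicIdx p m hp κ) := by
    intro m κ
    have h := hrec m κ
    have h2 : f' m κ - f' (m + 1) (padicIdx p m hp κ) = g m κ / (p : ℂ) ^ m := by
      rw [eq_div_iff (hpm m)]
      linear_combination h
    linear_combination h2
  have key : ∀ N, f' n k = (∑ i ∈ Finset.range N, term hp g n k i) +
      f' (n + N) (chainIdx p hp n N k) := by
    intro N
    induction N with
    | zero =>
        rw [Finset.range_zero, Finset.sum_empty, zero_add]
        exact apply_congr f' (Nat.add_zero n).symm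
          (by show (k : ℕ) = p ^ 0 * (k : ℕ); simp)
    | succ N ih =>
        rw [Finset.sum_range_succ, ih, hstep (n + N) (chainIdx p hp n N k)]
        have hcongr : f' ((n + N) + 1) (padicIdx p (n + N) hp (chainIdx p hp n N k))
            = f' (n + (N + 1)) (chainIdx p hp n (N + 1) k) :=
          apply_congr f' (by omega)
            (by show p * (p ^ N * (k : ℕ)) = p ^ (N + 1) * (k : ℕ); rw [pow_succ]; ring)
        rw [hcongr]
        have hterm : term hp g n k N
            = g (n + N) (chainIdx p hp n N k) / (p : ℂ) ^ (n + N) := rfl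
        rw [hterm]
        ring
  have h1 : Tendsto (fun N => ∑ i ∈ Finset.range N, term hp g n k i) atTop
      (nhds (sol hp g n k)) := (summable_term hp g hg hp1 n k).hasSum.tendsto_sum_nat
  have h2sq : Summable (fun N => ‖f' (n + N) (chainIdx p hp n N k)‖ ^ 2) := by
    have h := hf'.comp_injective (chainMap_injective p hp n k)
    exact h.congr fun i => rfl
  have h2norm : Tendsto (fun N => ‖f' (n + N) (chainIdx p hp n N k)‖) atTop (nhds 0) := by
    have h0 := h2sq.tendsto_atTop_zero
    have hsq := (Real.continuous_sqrt.tendsto 0).comp h0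
    simp only [Function.comp_def, Real.sqrt_zero] at hsq
    refine hsq.congr fun N => ?_
    rw [Real.sqrt_sq (norm_nonneg _)]
  have h2 : Tendsto (fun N => f' (n + N) (chainIdx p hp n N k)) atTop (nhds 0) :=
    tendsto_zero_iff_norm_tendsto_zero.mpr h2norm
  have h3 := h1.add h2
  rw [add_zero] at h3
  have heq : (fun N => (∑ i ∈ Finset.range N, term hp g n k i) +
      f' (n + N) (chainIdx p hp n N k)) = fun _ => f' n k :=
    funext fun N => (key N).symm
  rw [heq] at h3
  exact tendsto_nhds_unique (tendsto_const_nhds) h3 |>.symm ▸ rfl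

end Main

end Stmt9Aux

/-- The operator `D̂ f̂_n(k) = p^n (f̂_n(k) - f̂_{n+1}(pk))` on its maximal `ℓ²` domain is
invertible with bounded inverse of norm at most `((1-p^{-2})(1-p^{-1}))^{-1/2}`. -/
theorem stmt9 (p : ℕ) (hp : p.Prime) (g : ∀ n : ℕ, Fin (p ^ n) → ℂ)
    (hg : Summable (fun x : Σ n : ℕ, Fin (p ^ n) => ‖g x.1 x.2‖ ^ 2)) :
    ∃ f : ∀ n : ℕ, Fin (p ^ n) → ℂ,
      Summable (fun x : Σ n : ℕ, Fin (p ^ n) => ‖f x.1 x.2‖ ^ 2) ∧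
      (∀ n (k : Fin (p ^ n)),
        (p : ℂ) ^ n * (f n k - f (n + 1) (padicIdx p n hp.pos k)) = g n k) ∧
      (∑' x : Σ n : ℕ, Fin (p ^ n), ‖f x.1 x.2‖ ^ 2) ≤
        ((1 - (p : ℝ)⁻¹ ^ 2) * (1 - (p : ℝ)⁻¹))⁻¹ *
          ∑' x : Σ n : ℕ, Fin (p ^ n), ‖g x.1 x.2‖ ^ 2 ∧
      ∀ f' : ∀ n : ℕ, Fin (p ^ n) → ℂ,
        Summable (fun x : Σ n : ℕ, Fin (p ^ n) => ‖f' x.1 x.2‖ ^ 2) →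
        (∀ n (k : Fin (p ^ n)),
          (p : ℂ) ^ n * (f' n k - f' (n + 1) (padicIdx p n hp.pos k)) = g n k) →
        f' = f := by
  obtain ⟨hsum, hbound⟩ := Stmt9Aux.sol_l2 hp.pos g hg hp.one_lt
  refine ⟨Stmt9Aux.sol hp.pos g, hsum,
    fun n k => Stmt9Aux.sol_rec hp.pos g hg hp.one_lt n k, ?_,
    fun f' hf' hrec => Stmt9Aux.sol_unique hp.pos g hg hp.one_lt f' hf' hrec⟩
  refine hbound.trans ?_
  set r : ℝ := (p : ℝ)⁻¹ with hr
  have hr0 : 0 ≤ r := Stmt9Aux.r_nonneg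
  have hr1 : r < 1 := Stmt9Aux.r_lt_one hp.one_lt
  have hS0 : 0 ≤ ∑' x : Σ n : ℕ, Fin (p ^ n), ‖g x.1 x.2‖ ^ 2 :=
    tsum_nonneg fun _ => sq_nonneg _
  have hc1 : (0:ℝ) ≤ (1 - r ^ 2)⁻¹ := inv_nonneg.2 (by nlinarith)
  have h12 : (1 - r ^ 2)⁻¹ ≤ (1 - r)⁻¹ := by
    have h1 : (0:ℝ) < 1 - r := by linarith
    have h2 : 1 - r ≤ 1 - r ^ 2 := by nlinarith
    gcongr
  calc (1 - r ^ 2)⁻¹ * ((1 - r ^ 2)⁻¹ * ∑' x : Σ n : ℕ, Fin (p ^ n), ‖g x.1 x.2‖ ^ 2)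
      ≤ (1 - r ^ 2)⁻¹ * ((1 - r)⁻¹ * ∑' x : Σ n : ℕ, Fin (p ^ n), ‖g x.1 x.2‖ ^ 2) :=
        mul_le_mul_of_nonneg_left (mul_le_mul_of_nonneg_right h12 hS0) hc1
    _ = ((1 - r ^ 2) * (1 - r))⁻¹ * ∑' x : Σ n : ℕ, Fin (p ^ n), ‖g x.1 x.2‖ ^ 2 := by
        rw [mul_inv]; ring
end

section
/- The inverse operator D̂^{−1} is Hilbert–Schmidt, with Hilbert–Schmidt norm squared equal to 1/((1 − p^{−1})(1 − p^{−2})). -/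
/-- The integral kernel of `D̂⁻¹`: `K(n,k,i,r) = p^{-i}` if `i ≥ n` and `r = l p^{α-n+i}`,
where `k = l p^α` with `p ∤ l`, and `0` otherwise. -/
noncomputable def hsKernel (p n k i r : ℕ) : ℝ :=
  if n ≤ i ∧ r = k / p ^ padicValNat p k * p ^ (padicValNat p k + (i - n)) then
    ((p : ℝ) ^ i)⁻¹ else 0

/-!
Since `k = l p^α`, the point `r = l p^{α-n+i}` is just `k p^{i-n}`, so for `i ≥ n` every row
`(n, k, i, ·)` of the kernel has exactly one nonzero entry, equal to `p^{-i}`. Summing the squares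
gives `∑_{i ≥ n} p^{-2i} = p^{-2n} / (1 - p^{-2})` for each of the `p^n` values of `k`, and then
`∑_n p^n p^{-2n} / (1 - p^{-2}) = 1 / ((1 - p^{-1})(1 - p^{-2}))`. The computation is done in
`ℝ≥0∞`, where the iterated sums need no summability side conditions.
-/

open ENNReal

lemma hsKernel_eq (p n k i r : ℕ) :
    hsKernel p n k i r = if n ≤ i ∧ r = k * p ^ (i - n) then ((p : ℝ) ^ i)⁻¹ else 0 := by
  rw [hsKernel, pow_add, ← mul_assoc, Nat.div_mul_cancel pow_padicValNat_dvd]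

lemma mul_pow_sub_lt_pow {p n i k : ℕ} (hp : 0 < p) (hk : k < p ^ n) (hni : n ≤ i) :
    k * p ^ (i - n) < p ^ i :=
  calc k * p ^ (i - n) < p ^ n * p ^ (i - n) := Nat.mul_lt_mul_of_pos_right hk (pow_pos hp _)
    _ = p ^ i := by rw [← pow_add, Nat.add_sub_cancel' hni]

lemma sum_ofReal_hsKernel_sq {p n k : ℕ} (hp : 0 < p) (hk : k < p ^ n) (i : ℕ) :
    ∑ r : Fin (p ^ i), ENNReal.ofReal (hsKernel p n k i r ^ 2)
      = if n ≤ i then ((p : ℝ≥0∞)⁻¹ ^ 2) ^ i else 0 := by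
  split_ifs with hni
  · let r₀ : Fin (p ^ i) := ⟨k * p ^ (i - n), mul_pow_sub_lt_pow hp hk hni⟩
    rw [Finset.sum_eq_single r₀]
    · have hp' : (0 : ℝ) < p := Nat.cast_pos.2 hp
      rw [hsKernel_eq, if_pos ⟨hni, rfl⟩, ENNReal.ofReal_pow (by positivity),
        ENNReal.ofReal_inv_of_pos (by positivity), ENNReal.ofReal_pow hp'.le,
        ENNReal.ofReal_natCast, ENNReal.inv_pow, ← pow_mul, ← pow_mul, mul_comm]
    · intro r _ hr
      rw [hsKernel_eq, if_neg fun h => hr (Fin.ext h.2)]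
      simp
    · simp
  · refine Finset.sum_eq_zero fun r _ => ?_
    rw [hsKernel_eq, if_neg fun h => hni h.1]
    simp

lemma ENNReal.tsum_geometric_ge (n : ℕ) (x : ℝ≥0∞) :
    ∑' i, (if n ≤ i then x ^ i else 0) = x ^ n * (1 - x)⁻¹ := by
  rw [← (add_left_injective n).tsum_eq]
  · simp only [le_add_iff_nonneg_left, zero_le, if_true, pow_add]
    rw [ENNReal.tsum_mul_right, ENNReal.tsum_geometric, mul_comm]
  · intro i hi
    have hni : n ≤ i := by by_contra h; simp [h] at hi
    exact ⟨i - n, Nat.sub_add_cancel hni⟩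

lemma tsum_ofReal_hsKernel_sq {p : ℕ} (hp : 0 < p) :
    ∑' x : Σ n : ℕ, Fin (p ^ n) × Σ i : ℕ, Fin (p ^ i),
        ENNReal.ofReal (hsKernel p x.1 x.2.1 x.2.2.1 x.2.2.2 ^ 2)
      = (1 - (p : ℝ≥0∞)⁻¹ ^ 2)⁻¹ * (1 - (p : ℝ≥0∞)⁻¹)⁻¹ := by
  set q : ℝ≥0∞ := (p : ℝ≥0∞)⁻¹
  have row (n : ℕ) (k : Fin (p ^ n)) :
      ∑' z : Σ i : ℕ, Fin (p ^ i), ENNReal.ofReal (hsKernel p n k z.1 z.2 ^ 2)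
        = (q ^ 2) ^ n * (1 - q ^ 2)⁻¹ := by
    rw [ENNReal.tsum_sigma', ← ENNReal.tsum_geometric_ge]
    exact tsum_congr fun i => (tsum_fintype _).trans (sum_ofReal_hsKernel_sq hp k.2 i)
  have hpq : (p : ℝ≥0∞) * q = 1 :=
    ENNReal.mul_inv_cancel (Nat.cast_ne_zero.2 hp.ne') (natCast_ne_top p)
  calc _ = ∑' n : ℕ, (p : ℝ≥0∞) ^ n * ((q ^ 2) ^ n * (1 - q ^ 2)⁻¹) := by
        refine (ENNReal.tsum_sigma' _).trans (tsum_congr fun n => ?_)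
        simp [ENNReal.tsum_prod', row]
    _ = ∑' n : ℕ, (1 - q ^ 2)⁻¹ * q ^ n := by
        refine tsum_congr fun n => ?_
        rw [← mul_assoc, ← mul_pow, sq, ← mul_assoc, hpq, one_mul, mul_comm]
    _ = _ := by rw [ENNReal.tsum_mul_left, ENNReal.tsum_geometric]

/-- `D̂⁻¹` is Hilbert–Schmidt with Hilbert–Schmidt norm squared `1/((1-p⁻¹)(1-p⁻²))`. -/
theorem stmt10 (p : ℕ) (hp : p.Prime) :
    ∑' x : Σ n : ℕ, Fin (p ^ n) × Σ i : ℕ, Fin (p ^ i),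
        hsKernel p x.1 (x.2.1 : ℕ) x.2.2.1 (x.2.2.2 : ℕ) ^ 2
      = ((1 - (p : ℝ)⁻¹) * (1 - (p : ℝ)⁻¹ ^ 2))⁻¹ := by
  have hq : (p : ℝ≥0∞)⁻¹ ≤ 1 := ENNReal.inv_le_one.2 (mod_cast hp.one_le)
  calc _ = (∑' x : Σ n : ℕ, Fin (p ^ n) × Σ i : ℕ, Fin (p ^ i),
          ENNReal.ofReal (hsKernel p x.1 x.2.1 x.2.2.1 x.2.2.2 ^ 2)).toReal := by
        rw [ENNReal.tsum_toReal_eq fun _ => ofReal_ne_top]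
        exact tsum_congr fun x => (ENNReal.toReal_ofReal (sq_nonneg _)).symm
    _ = _ := by
        rw [tsum_ofReal_hsKernel_sq hp.pos, ENNReal.toReal_mul, toReal_inv, toReal_inv,
          toReal_sub_of_le (pow_le_one₀ zero_le hq) one_ne_top, toReal_sub_of_le hq one_ne_top,
          toReal_pow, toReal_inv, toReal_one, toReal_natCast, mul_inv, mul_comm]
end

section
/- If f is in the kernel of D on all functions on the p-adic tree and its weak boundary limit is zero (i.e. lim_{n→∞} f̂_n(l p^{n−m}) = 0 for all m and all l with p ∤ l), then f is identically zero. -/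
/-!
The kernel condition makes the Fourier coefficients constant along the rays `k, p k, p² k, …`:
`F (n + d) (k * p ^ d) = F n k`. Writing `k = p ^ j * l` with `p ∤ l`, the coefficient `F n k` is
therefore the eventual value of the sequence `F N (l * p ^ (N - m) % p ^ N)` with `m = n - j`,
which tends to `0` by hypothesis. So every `F n` vanishes, and so does `f n`, by injectivity of the
discrete Fourier transform on `ZMod (p ^ n)`.
-/

open Finset Complex Filter ZMod
open scoped Real

lemma ZMod.sum_val_eq_sum_range {M : Type*} [AddCommMonoid M] (N : ℕ) [NeZero N] (G : ℕ → M) :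
    ∑ j : ZMod N, G j.val = ∑ k ∈ range N, G k :=
  sum_nbij ZMod.val (fun j _ => mem_range.2 (val_lt j)) (val_injective N).injOn
    (fun k hk => ⟨k, mem_univ _, val_cast_of_lt (mem_range.1 hk)⟩) (fun _ _ => rfl)

lemma ZMod.stdAddChar_neg_mul (N : ℕ) [NeZero N] (j x : ZMod N) :
    stdAddChar (-(j * x)) = exp (-(2 * π * I) * j.val * x.val / N) := by
  have : -(j * x) = ((-(j.val * x.val : ℤ) : ℤ) : ZMod N) := by simp
  rw [this, stdAddChar_coe]
  push_cast
  ring_nf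

lemma eq_zero_of_forall_sum_mul_exp_eq_zero {N : ℕ} [NeZero N] {g : ℕ → ℂ}
    (h : ∀ l < N, ∑ k ∈ range N, g k * exp (-(2 * π * I) * k * l / N) = 0) {k : ℕ}
    (hk : k < N) : g k = 0 := by
  have hdft : 𝓕 (fun j : ZMod N => g j.val) = 0 := by
    ext x
    rw [dft_apply, Pi.zero_apply, ← h x.val (val_lt x), ← sum_val_eq_sum_range]
    exact sum_congr rfl fun j _ => by rw [stdAddChar_neg_mul, smul_eq_mul, mul_comm]
  simpa [val_cast_of_lt hk] using congrFun (dft.map_eq_zero_iff.1 hdft) (k : ZMod N)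

section Tree

variable {p : ℕ} {F : ℕ → ℕ → ℂ}

lemma mul_pow_lt_pow_add (hp : 0 < p) {n k : ℕ} (hk : k < p ^ n) (d : ℕ) :
    k * p ^ d < p ^ (n + d) :=
  pow_add p n d ▸ Nat.mul_lt_mul_of_pos_right hk (pow_pos hp d)

lemma apply_mul_pow_eq_of_kernel (hp : 0 < p)
    (hker : ∀ n k, k < p ^ n → F n k = F (n + 1) (p * k)) {n k : ℕ} (hk : k < p ^ n) :
    ∀ d, F (n + d) (k * p ^ d) = F n k
  | 0 => by simp
  | d + 1 => by
    rw [← add_assoc, pow_succ, ← mul_assoc, mul_comm _ p,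
      ← hker _ _ (mul_pow_lt_pow_add hp hk d), apply_mul_pow_eq_of_kernel hp hker hk d]

lemma exists_not_dvd_mul_pow_mod_eq (hp : p.Prime) {n k : ℕ} (hk : k < p ^ n) :
    ∃ m l, ¬ p ∣ l ∧ ∀ d, l * p ^ (n + d - m) % p ^ (n + d) = k * p ^ d := by
  rcases Nat.eq_zero_or_pos k with rfl | hk0
  · exact ⟨0, 1, hp.not_dvd_one, fun d => by simp⟩
  set j := k.factorization p
  have hj : j < n :=
    (Nat.pow_lt_pow_iff_right hp.one_lt).1 ((Nat.ordProj_le p hk0.ne').trans_lt hk)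
  refine ⟨n - j, k / p ^ j, Nat.not_dvd_ordCompl hp hk0.ne', fun d => ?_⟩
  have hexp : n + d - (n - j) = j + d := by omega
  have hmul : k / p ^ j * p ^ (j + d) = k * p ^ d := by
    rw [pow_add, ← mul_assoc, mul_comm _ (p ^ j), Nat.ordProj_mul_ordCompl_eq_self]
  rw [hexp, hmul, Nat.mod_eq_of_lt (mul_pow_lt_pow_add hp.pos hk d)]

lemma eq_zero_of_kernel_of_tendsto_zero (hp : p.Prime)
    (hker : ∀ n k, k < p ^ n → F n k = F (n + 1) (p * k))
    (hlim : ∀ m l : ℕ, ¬ p ∣ l →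
        Tendsto (fun n => F n (l * p ^ (n - m) % p ^ n)) atTop (nhds 0))
    {n k : ℕ} (hk : k < p ^ n) : F n k = 0 := by
  obtain ⟨m, l, hpl, hidx⟩ := exists_not_dvd_mul_pow_mod_eq hp hk
  have hconst : (fun d => F (d + n) (l * p ^ (d + n - m) % p ^ (d + n))) = fun _ => F n k :=
    funext fun d => by rw [add_comm d n, hidx, apply_mul_pow_eq_of_kernel hp.pos hker hk]
  have := (tendsto_add_atTop_iff_nat n).2 (hlim m l hpl)
  rw [hconst] at this
  exact tendsto_nhds_unique tendsto_const_nhds this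

end Tree

/-- If `f` is in the kernel of `D` on all functions on the `p`-adic tree (expressed via its
Fourier coefficients `F`) and its weak boundary limit is zero, then `f` is identically zero. -/
theorem stmt14 (p : ℕ) (hp : p.Prime) (f F : ℕ → ℕ → ℂ)
    (hF : ∀ n l, F n l = ((p : ℂ) ^ n)⁻¹ * ∑ k ∈ Finset.range (p ^ n),
        f n k * Complex.exp (-(2 * Real.pi * Complex.I) * (k : ℂ) * (l : ℂ) / ((p : ℂ) ^ n)))
    (hker : ∀ n k, k < p ^ n → F n k = F (n + 1) (p * k))
    (hlim : ∀ m l : ℕ, ¬ p ∣ l →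
        Filter.Tendsto (fun n => F n (l * p ^ (n - m) % p ^ n)) Filter.atTop (nhds 0)) :
    ∀ n k, k < p ^ n → f n k = 0 := by
  intro n k hk
  have : NeZero (p ^ n) := ⟨pow_ne_zero n hp.ne_zero⟩
  refine eq_zero_of_forall_sum_mul_exp_eq_zero (fun l hl => ?_) hk
  have hFl := hF n l
  rw [eq_zero_of_kernel_of_tendsto_zero hp hker hlim hl, eq_comm, mul_eq_zero] at hFl
  simpa [hp.ne_zero] using hFl
end

section
/- For a Lipschitz function φ : Z_p → ℂ with Lipschitz constant L(φ) (with respect to the p-adic metric), the commutator [D, π(φ)] on the weighted ℓ² space of the p-adic tree is bounded with operator norm at most L(φ). -/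
/-!
Since `|i·pⁿ|_p ≤ p⁻ⁿ`, every coefficient `φ(k) − φ(k + i·pⁿ)` of the commutator at a vertex
`k` of level `n` is at most `L·p⁻ⁿ`. Cauchy–Schwarz over the `p` children then bounds the
weighted square of the commutator at `k` by `L²` times the weighted squares of `g` on the
children of `k`. Distinct vertices have disjoint sets of children, so summing over all vertices
gives `‖[D, π(φ)] g‖² ≤ L² ‖g‖²`.
-/

/-- The vertex `k + i·p^n` viewed in level `n+1` of the `p`-adic tree. -/
def treeIdx (p n : ℕ) (k : Fin (p ^ n)) (i : Fin p) : Fin (p ^ (n + 1)) :=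
  ⟨(k : ℕ) + (i : ℕ) * p ^ n, by
    have hk := k.2
    have hi := i.2
    calc (k : ℕ) + (i : ℕ) * p ^ n < ((i : ℕ) + 1) * p ^ n := by
          rw [Nat.add_mul, one_mul]; omega
      _ ≤ p * p ^ n := Nat.mul_le_mul_right _ hi
      _ = p ^ (n + 1) := by ring⟩

def treeChild (p : ℕ) (z : (Σ n : ℕ, Fin (p ^ n)) × Fin p) : Σ n : ℕ, Fin (p ^ n) :=
  ⟨z.1.1 + 1, treeIdx p z.1.1 z.1.2 z.2⟩

theorem treeIdx_injective {p n : ℕ} {k k' : Fin (p ^ n)} {i i' : Fin p}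
    (h : treeIdx p n k i = treeIdx p n k' i') : k = k' ∧ i = i' := by
  have hval : (k : ℕ) + i * p ^ n = k' + i' * p ^ n := congrArg Fin.val h
  have : finProdFinEquiv (i, k) = finProdFinEquiv (i', k') := by
    ext
    simp only [finProdFinEquiv, Equiv.coe_fn_mk]
    linarith [mul_comm (i : ℕ) (p ^ n), mul_comm (i' : ℕ) (p ^ n)]
  obtain ⟨hi, hk⟩ := Prod.ext_iff.mp (finProdFinEquiv.injective this)
  exact ⟨hk, hi⟩

theorem treeChild_injective (p : ℕ) : Function.Injective (treeChild p) := by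
  rintro ⟨⟨n, k⟩, i⟩ ⟨⟨m, k'⟩, i'⟩ h
  simp only [treeChild, Sigma.mk.inj_iff, Nat.add_right_cancel_iff] at h
  obtain ⟨rfl, h⟩ := h
  obtain ⟨rfl, rfl⟩ := treeIdx_injective (eq_of_heq h)
  rfl

theorem PadicInt.norm_natCast_sub_add_mul_pow_le {p : ℕ} [Fact p.Prime] (k i n : ℕ) :
    ‖(k : ℤ_[p]) - ((k + i * p ^ n : ℕ) : ℤ_[p])‖ ≤ ((p : ℝ) ^ n)⁻¹ := by
  have hcast :
      (k : ℤ_[p]) - ((k + i * p ^ n : ℕ) : ℤ_[p]) = -((i : ℤ_[p]) * (p : ℤ_[p]) ^ n) := by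
    push_cast; ring
  rw [hcast, norm_neg, norm_mul, norm_pow, PadicInt.norm_p, inv_pow]
  exact mul_le_of_le_one_left (by positivity) (PadicInt.norm_le_one _)

theorem norm_sum_mul_sq_le {ι R : Type*} [SeminormedRing R] (s : Finset ι)
    (a b : ι → R) {M : ℝ}
    (ha : ∀ i ∈ s, ‖a i‖ ≤ M) :
    ‖∑ i ∈ s, a i * b i‖ ^ 2 ≤ M ^ 2 * (s.card * ∑ i ∈ s, ‖b i‖ ^ 2) := by
  have hsum : ‖∑ i ∈ s, a i * b i‖ ≤ M * ∑ i ∈ s, ‖b i‖ := by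
    rw [Finset.mul_sum]
    refine (norm_sum_le _ _).trans (Finset.sum_le_sum fun i hi => ?_)
    exact (norm_mul_le _ _).trans (mul_le_mul_of_nonneg_right (ha i hi) (norm_nonneg _))
  calc ‖∑ i ∈ s, a i * b i‖ ^ 2 ≤ (M * ∑ i ∈ s, ‖b i‖) ^ 2 :=
        pow_le_pow_left₀ (norm_nonneg _) hsum 2
    _ = M ^ 2 * (∑ i ∈ s, ‖b i‖) ^ 2 := mul_pow _ _ _
    _ ≤ M ^ 2 * (s.card * ∑ i ∈ s, ‖b i‖ ^ 2) :=
        mul_le_mul_of_nonneg_left (sq_sum_le_card_mul_sum_sq) (sq_nonneg M)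

theorem tsum_le_mul_tsum_of_le_sum_comp_injective {α ι : Type*} [Fintype ι]
    {f g : α → ℝ} {e : α × ι → α} (he : Function.Injective e) {C : ℝ} (hC : 0 ≤ C)
    (hf : ∀ x, 0 ≤ f x) (hg : ∀ x, 0 ≤ g x) (hgs : Summable g)
    (hfg : ∀ x, f x ≤ C * ∑ i, g (e (x, i))) :
    ∑' x, f x ≤ C * ∑' x, g x := by
  have hge : Summable (g ∘ e) := hgs.comp_injective he
  have hbound : Summable fun x => C * ∑ i, g (e (x, i)) :=
    (summable_sum fun i _ => hge.comp_injective (Prod.mk_left_injective i)).mul_left C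
  calc ∑' x, f x ≤ ∑' x, C * ∑ i, g (e (x, i)) :=
        (Summable.of_nonneg_of_le hf hfg hbound).tsum_le_tsum hfg hbound
    _ = C * ∑' z, g (e z) := by
        rw [tsum_mul_left]
        congr 1
        exact ((hge.tsum_prod' fun x => .of_finite).trans
          (tsum_congr fun x => tsum_fintype _)).symm
    _ ≤ C * ∑' x, g x :=
        mul_le_mul_of_nonneg_left
          (hge.tsum_le_tsum_of_inj e he (fun x _ => hg x) (fun _ => le_rfl) hgs) hC

/-- For a Lipschitz function `φ` on `ℤ_p` with Lipschitz constant `L`, the commutator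
`[D, π(φ)]` is bounded with operator norm at most `L`:
`‖[D,π(φ)] g‖² ≤ L² ‖g‖²` for all `g` in the weighted `ℓ²` space. -/
theorem stmt16 (p : ℕ) [hp : Fact p.Prime] (φ : ℤ_[p] → ℂ) (L : ℝ)
    (hL : ∀ x y : ℤ_[p], ‖φ x - φ y‖ ≤ L * ‖x - y‖)
    (g : ∀ n : ℕ, Fin (p ^ n) → ℂ)
    (hg : Summable (fun x : Σ n : ℕ, Fin (p ^ n) => ‖g x.1 x.2‖ ^ 2 * ((p : ℝ) ^ x.1)⁻¹)) :
    ∑' x : Σ n : ℕ, Fin (p ^ n),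
        ‖((p : ℂ) ^ x.1 / (p : ℂ)) * ∑ i : Fin p,
            (φ (((x.2 : ℕ) : ℤ_[p])) - φ ((((x.2 : ℕ) + (i : ℕ) * p ^ x.1 : ℕ)) : ℤ_[p])) *
              g (x.1 + 1) (treeIdx p x.1 x.2 i)‖ ^ 2 * ((p : ℝ) ^ x.1)⁻¹
      ≤ L ^ 2 * ∑' x : Σ n : ℕ, Fin (p ^ n), ‖g x.1 x.2‖ ^ 2 * ((p : ℝ) ^ x.1)⁻¹ := by
  have hL0 : 0 ≤ L := by simpa using (norm_nonneg _).trans (hL 0 1)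
  refine tsum_le_mul_tsum_of_le_sum_comp_injective (treeChild_injective p) (sq_nonneg L)
    (fun x => by positivity) (fun x => by positivity) hg ?_
  rintro ⟨n, k⟩
  have hφ : ∀ i ∈ (Finset.univ : Finset (Fin p)),
      ‖φ ((k : ℕ) : ℤ_[p]) - φ ((k + (i : ℕ) * p ^ n : ℕ) : ℤ_[p])‖
      ≤ L * ((p : ℝ) ^ n)⁻¹ := fun i _ =>
    (hL _ _).trans (mul_le_mul_of_nonneg_left
      (PadicInt.norm_natCast_sub_add_mul_pow_le _ _ _) hL0)
  have hp0 : (p : ℝ) ≠ 0 := by exact_mod_cast hp.out.ne_zero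
  simp only [treeChild, ← Finset.sum_mul, norm_mul, mul_pow, norm_div, norm_pow,
    Complex.norm_natCast]
  calc _ ≤ ((p : ℝ) ^ n / p) ^ 2 * ((L * ((p : ℝ) ^ n)⁻¹) ^ 2 *
          (p * ∑ i : Fin p, ‖g (n + 1) (treeIdx p n k i)‖ ^ 2)) * ((p : ℝ) ^ n)⁻¹ := by
        gcongr
        simpa using norm_sum_mul_sq_le Finset.univ _ _ hφ
    _ = _ := by field_simp; ring
end

section
/- The seminorms L and L_D are equivalent: for every Lipschitz function φ on Z_p, √((p−1)/p) · L(φ) ≥ L_D(φ) ≥ (p−1)/(2p√p) · L(φ), where L_D(φ) = ‖[D, π(φ)]‖ and L(φ) is the p-adic Lipschitz constant. -/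
/-- The Lipschitz seminorm `L(φ) = sup_{x≠y} |φ(x)-φ(y)|/|x-y|_p`. -/
noncomputable def lipSeminorm (p : ℕ) [Fact p.Prime] (φ : ℤ_[p] → ℂ) : ℝ :=
  ⨆ q : {q : ℤ_[p] × ℤ_[p] // q.1 ≠ q.2}, ‖φ (q : ℤ_[p] × ℤ_[p]).1 - φ (q : ℤ_[p] × ℤ_[p]).2‖ / ‖(q : ℤ_[p] × ℤ_[p]).1 - (q : ℤ_[p] × ℤ_[p]).2‖

/-- The spectral seminorm
`L_D(φ) = (sup_{n, 0≤k<p^n} (1/p) ∑_{i=1}^{p-1} |φ(k) - φ(k+ip^n)|² / p^{-2n})^{1/2}`. -/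
noncomputable def spectralSeminorm (p : ℕ) [Fact p.Prime] (φ : ℤ_[p] → ℂ) : ℝ :=
  Real.sqrt (⨆ x : Σ n : ℕ, Fin (p ^ n),
    (p : ℝ)⁻¹ * ∑ i ∈ Finset.Icc 1 (p - 1),
      ‖φ (((x.2 : ℕ) : ℤ_[p])) - φ ((((x.2 : ℕ) + i * p ^ x.1 : ℕ)) : ℤ_[p])‖ ^ 2 *
        (p : ℝ) ^ (2 * x.1))

/-! Each summand of `L_D(φ)²` compares `φ` at two points at distance at most `p⁻ⁿ`, which gives
the upper bound. Conversely, a single summand bounds `‖φ k - φ (k + i pⁿ)‖` by `√p · L_D(φ) · p⁻ⁿ`.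
Walking from `x.appr n` to `x` one `p`-adic digit at a time and summing the geometric series gives
`‖φ x - φ (x.appr n)‖ ≤ √p · L_D(φ) · p⁻ⁿ · p / (p - 1)`; two points at distance `p⁻ⁿ` have the
same `appr n`, whence the factor `2`. -/

open Filter Topology

namespace PadicInt

variable {p : ℕ} [Fact p.Prime]

theorem norm_sub_appr_le (x : ℤ_[p]) (n : ℕ) : ‖x - x.appr n‖ ≤ (p : ℝ)⁻¹ ^ n := by
  simpa [zpow_neg, inv_pow] using (norm_le_pow_iff_mem_span_pow _ n).mpr (appr_spec n x)

theorem tendsto_appr (x : ℤ_[p]) : Tendsto (fun n ↦ (x.appr n : ℤ_[p])) atTop (𝓝 x) := by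
  have hp : (p : ℝ)⁻¹ < 1 := inv_lt_one_of_one_lt₀ (mod_cast (Fact.out : p.Prime).one_lt)
  refine tendsto_iff_norm_sub_tendsto_zero.mpr <| squeeze_zero (fun _ ↦ norm_nonneg _)
    (fun n ↦ ?_) (tendsto_pow_atTop_nhds_zero_of_lt_one (by positivity) hp)
  rw [norm_sub_rev]
  exact norm_sub_appr_le x n

theorem norm_natCast_sub_natCast_add_mul_pow_le (k i n : ℕ) :
    ‖(k : ℤ_[p]) - ((k + i * p ^ n : ℕ) : ℤ_[p])‖ ≤ (p : ℝ)⁻¹ ^ n := by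
  rw [Nat.cast_add, sub_add_cancel_left, norm_neg, Nat.cast_mul, Nat.cast_pow, norm_mul, norm_pow,
    norm_p]
  exact mul_le_of_le_one_left (by positivity) (norm_le_one _)

theorem appr_eq_of_norm_sub_le {x y : ℤ_[p]} {n : ℕ} (h : ‖x - y‖ ≤ (p : ℝ)⁻¹ ^ n) :
    x.appr n = y.appr n := by
  have hnorm : ‖(((y.appr n : ℤ) - x.appr n : ℤ) : ℤ_[p])‖ ≤ (p : ℝ) ^ (-n : ℤ) := by
    have hsplit : (((y.appr n : ℤ) - x.appr n : ℤ) : ℤ_[p]) =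
        (x - x.appr n) + ((y - x) + (y.appr n - y)) := by
      push_cast; ring
    rw [hsplit, zpow_neg, zpow_natCast, ← inv_pow]
    refine (nonarchimedean _ _).trans (max_le (norm_sub_appr_le x n) ?_)
    refine (nonarchimedean _ _).trans (max_le (by rwa [norm_sub_rev]) ?_)
    rw [norm_sub_rev]
    exact norm_sub_appr_le y n
  have hmod : x.appr n ≡ y.appr n [MOD p ^ n] := by
    rw [Nat.modEq_iff_dvd]
    exact_mod_cast norm_int_le_pow_iff_dvd.mp hnorm
  exact hmod.eq_of_lt_of_lt (appr_lt x n) (appr_lt y n)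

theorem exists_appr_succ_eq (x : ℤ_[p]) (n : ℕ) :
    ∃ i < p, x.appr (n + 1) = x.appr n + i * p ^ n := by
  obtain ⟨i, hi⟩ := dvd_appr_sub_appr x n (n + 1) (Nat.le_add_right n 1)
  have hmono := appr_mono x (Nat.le_add_right n 1)
  refine ⟨i, ?_, by rw [mul_comm, ← hi]; omega⟩
  have hlt := appr_lt x (n + 1)
  rw [pow_succ] at hlt
  have : p ^ n * i < p ^ n * p := by rw [← hi]; omega
  exact Nat.lt_of_mul_lt_mul_left this

end PadicInt

section Seminorms

variable {p : ℕ} [Fact p.Prime] {φ : ℤ_[p] → ℂ}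

theorem norm_sub_le_lipSeminorm_mul (hφ : ∃ C : ℝ, ∀ x y : ℤ_[p], ‖φ x - φ y‖ ≤ C * ‖x - y‖)
    (x y : ℤ_[p]) : ‖φ x - φ y‖ ≤ lipSeminorm p φ * ‖x - y‖ := by
  obtain ⟨C, hC⟩ := hφ
  rcases eq_or_ne x y with rfl | hne
  · simp
  have hpos : 0 < ‖x - y‖ := norm_pos_iff.mpr (sub_ne_zero.mpr hne)
  have hbdd : BddAbove (Set.range fun q : {q : ℤ_[p] × ℤ_[p] // q.1 ≠ q.2} ↦
      ‖φ q.1.1 - φ q.1.2‖ / ‖q.1.1 - q.1.2‖) := by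
    refine ⟨C, Set.forall_mem_range.mpr fun q ↦ ?_⟩
    exact (div_le_iff₀ (norm_pos_iff.mpr (sub_ne_zero.mpr q.2))).mpr (hC _ _)
  rw [← div_le_iff₀ hpos]
  exact le_ciSup hbdd ⟨(x, y), hne⟩

theorem lipSeminorm_le {A : ℝ} (h : ∀ x y : ℤ_[p], ‖φ x - φ y‖ ≤ A * ‖x - y‖) :
    lipSeminorm p φ ≤ A := by
  have : Nonempty {q : ℤ_[p] × ℤ_[p] // q.1 ≠ q.2} := ⟨⟨(0, 1), zero_ne_one⟩⟩
  refine ciSup_le fun q ↦ ?_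
  exact (div_le_iff₀ (norm_pos_iff.mpr (sub_ne_zero.mpr q.2))).mpr (h _ _)

noncomputable def spectralTerm (p : ℕ) [Fact p.Prime] (φ : ℤ_[p] → ℂ)
    (x : Σ n : ℕ, Fin (p ^ n)) : ℝ :=
  (p : ℝ)⁻¹ * ∑ i ∈ Finset.Icc 1 (p - 1),
    ‖φ (((x.2 : ℕ) : ℤ_[p])) - φ ((((x.2 : ℕ) + i * p ^ x.1 : ℕ)) : ℤ_[p])‖ ^ 2 *
      (p : ℝ) ^ (2 * x.1)

theorem spectralSeminorm_eq_sqrt_iSup :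
    spectralSeminorm p φ = √(⨆ x, spectralTerm p φ x) := rfl

theorem spectralSeminorm_nonneg : 0 ≤ spectralSeminorm p φ := Real.sqrt_nonneg _

theorem spectralTerm_le {A : ℝ} (hA : 0 ≤ A) (h : ∀ x y : ℤ_[p], ‖φ x - φ y‖ ≤ A * ‖x - y‖)
    (x : Σ n : ℕ, Fin (p ^ n)) : spectralTerm p φ x ≤ ((p : ℝ) - 1) / p * A ^ 2 := by
  obtain ⟨n, k⟩ := x
  have hterm : ∀ i, ‖φ (k : ℕ) - φ ((k + i * p ^ n : ℕ))‖ ^ 2 * (p : ℝ) ^ (2 * n) ≤ A ^ 2 := by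
    intro i
    have hd : ‖φ (k : ℕ) - φ ((k + i * p ^ n : ℕ))‖ ≤ A * (p : ℝ)⁻¹ ^ n :=
      (h _ _).trans (mul_le_mul_of_nonneg_left
        (PadicInt.norm_natCast_sub_natCast_add_mul_pow_le _ _ _) hA)
    calc ‖φ (k : ℕ) - φ ((k + i * p ^ n : ℕ))‖ ^ 2 * (p : ℝ) ^ (2 * n)
        ≤ (A * (p : ℝ)⁻¹ ^ n) ^ 2 * (p : ℝ) ^ (2 * n) := by gcongr
      _ = A ^ 2 := by
        have : (p : ℝ) ≠ 0 := by exact_mod_cast (Fact.out : p.Prime).ne_zero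
        rw [inv_pow]
        field_simp
        ring
  have hcard : ((Finset.Icc 1 (p - 1)).card : ℝ) = p - 1 := by
    rw [Nat.card_Icc, Nat.add_sub_cancel, Nat.cast_pred (Fact.out : p.Prime).pos]
  calc spectralTerm p φ ⟨n, k⟩ ≤ (p : ℝ)⁻¹ * ((Finset.Icc 1 (p - 1)).card • A ^ 2) :=
        mul_le_mul_of_nonneg_left (Finset.sum_le_card_nsmul _ _ _ fun i _ ↦ hterm i)
          (by positivity)
    _ = ((p : ℝ) - 1) / p * A ^ 2 := by rw [nsmul_eq_mul, hcard]; ring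

theorem spectralSeminorm_le {A : ℝ} (hA : 0 ≤ A)
    (h : ∀ x y : ℤ_[p], ‖φ x - φ y‖ ≤ A * ‖x - y‖) :
    spectralSeminorm p φ ≤ √(((p : ℝ) - 1) / p) * A := by
  have : Nonempty (Σ n : ℕ, Fin (p ^ n)) := ⟨⟨0, 0⟩⟩
  rw [spectralSeminorm_eq_sqrt_iSup, ← Real.sqrt_sq hA, ← Real.sqrt_mul']
  exacts [Real.sqrt_le_sqrt (ciSup_le (spectralTerm_le hA h)), sq_nonneg A]

theorem norm_sub_le_spectralSeminorm (hbdd : BddAbove (Set.range (spectralTerm p φ)))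
    {n k i : ℕ} (hk : k < p ^ n) (hi : i < p) :
    ‖φ k - φ ((k + i * p ^ n : ℕ))‖ ≤ √p * spectralSeminorm p φ * (p : ℝ)⁻¹ ^ n := by
  rcases Nat.eq_zero_or_pos i with rfl | hi0
  · simp only [zero_mul, add_zero, sub_self, norm_zero]
    exact mul_nonneg (mul_nonneg (Real.sqrt_nonneg _) spectralSeminorm_nonneg) (by positivity)
  set d := ‖φ k - φ ((k + i * p ^ n : ℕ))‖
  set S := ⨆ x, spectralTerm p φ x
  have hp : (p : ℝ) ≠ 0 := by exact_mod_cast (Fact.out : p.Prime).ne_zero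
  have hS : (p : ℝ)⁻¹ * (d ^ 2 * (p : ℝ) ^ (2 * n)) ≤ S := by
    refine le_trans ?_ (le_ciSup hbdd ⟨n, ⟨k, hk⟩⟩)
    refine mul_le_mul_of_nonneg_left ?_ (by positivity)
    exact Finset.single_le_sum (f := fun j ↦ ‖φ k - φ ((k + j * p ^ n : ℕ))‖ ^ 2 *
      (p : ℝ) ^ (2 * n)) (fun _ _ ↦ by positivity) (Finset.mem_Icc.mpr ⟨hi0, by omega⟩)
  calc d ≤ √(p * S * ((p : ℝ)⁻¹ ^ n) ^ 2) := by
        refine Real.le_sqrt_of_sq_le ?_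
        calc d ^ 2 = p * ((p : ℝ)⁻¹ * (d ^ 2 * (p : ℝ) ^ (2 * n))) * ((p : ℝ)⁻¹ ^ n) ^ 2 := by
              rw [inv_pow]
              field_simp
              ring
          _ ≤ p * S * ((p : ℝ)⁻¹ ^ n) ^ 2 := by gcongr
    _ = √p * spectralSeminorm p φ * (p : ℝ)⁻¹ ^ n := by
        rw [Real.sqrt_mul' _ (sq_nonneg _), Real.sqrt_mul (Nat.cast_nonneg p),
          Real.sqrt_sq (by positivity), spectralSeminorm_eq_sqrt_iSup]

theorem norm_appr_sub_appr_le (hbdd : BddAbove (Set.range (spectralTerm p φ))) (x : ℤ_[p])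
    {n M : ℕ} (hnM : n ≤ M) :
    ‖φ (x.appr M) - φ (x.appr n)‖ ≤
      √p * spectralSeminorm p φ * ∑ j ∈ Finset.Ico n M, (p : ℝ)⁻¹ ^ j := by
  induction M, hnM using Nat.le_induction with
  | base => simp
  | succ M hnM ih =>
    obtain ⟨i, hi, hM⟩ := x.exists_appr_succ_eq M
    calc ‖φ (x.appr (M + 1)) - φ (x.appr n)‖
        ≤ ‖φ (x.appr M) - φ (x.appr (M + 1))‖ + ‖φ (x.appr M) - φ (x.appr n)‖ := by
          rw [norm_sub_rev (φ (x.appr M))]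
          exact norm_sub_le_norm_sub_add_norm_sub _ _ _
      _ ≤ √p * spectralSeminorm p φ * (p : ℝ)⁻¹ ^ M +
            √p * spectralSeminorm p φ * ∑ j ∈ Finset.Ico n M, (p : ℝ)⁻¹ ^ j := by
          rw [hM]
          exact add_le_add (norm_sub_le_spectralSeminorm hbdd (x.appr_lt M) hi) ih
      _ = √p * spectralSeminorm p φ * ∑ j ∈ Finset.Ico n (M + 1), (p : ℝ)⁻¹ ^ j := by
          rw [Finset.sum_Ico_succ_top hnM]
          ring

theorem norm_sub_appr_le_spectralSeminorm (hbdd : BddAbove (Set.range (spectralTerm p φ)))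
    (hφ : Continuous φ) (x : ℤ_[p]) (n : ℕ) :
    ‖φ x - φ (x.appr n)‖ ≤ √p * spectralSeminorm p φ * ((p : ℝ)⁻¹ ^ n / (1 - (p : ℝ)⁻¹)) := by
  have hp : (p : ℝ)⁻¹ < 1 := inv_lt_one_of_one_lt₀ (mod_cast (Fact.out : p.Prime).one_lt)
  have hlim : Tendsto (fun M ↦ ‖φ (x.appr M) - φ (x.appr n)‖) atTop
      (𝓝 ‖φ x - φ (x.appr n)‖) :=
    (((hφ.tendsto x).comp x.tendsto_appr).sub_const _).norm
  refine le_of_tendsto hlim (eventually_atTop.mpr ⟨n, fun M hnM ↦ ?_⟩)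
  refine (norm_appr_sub_appr_le hbdd x hnM).trans (mul_le_mul_of_nonneg_left ?_ ?_)
  · exact geom_sum_Ico_le_of_lt_one (by positivity) hp
  · exact mul_nonneg (Real.sqrt_nonneg _) spectralSeminorm_nonneg

theorem norm_sub_le_spectralSeminorm_mul (hbdd : BddAbove (Set.range (spectralTerm p φ)))
    (hφ : Continuous φ) (x y : ℤ_[p]) :
    ‖φ x - φ y‖ ≤ 2 * p * √p / (p - 1) * spectralSeminorm p φ * ‖x - y‖ := by
  rcases eq_or_ne x y with rfl | hne
  · simp
  have hp : (1 : ℝ) < p := mod_cast (Fact.out : p.Prime).one_lt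
  obtain ⟨n, hn⟩ : ∃ n : ℕ, ‖x - y‖ = (p : ℝ)⁻¹ ^ n :=
    ⟨(x - y).valuation, by
      rw [PadicInt.norm_eq_zpow_neg_valuation (sub_ne_zero.mpr hne), zpow_neg, zpow_natCast,
        inv_pow]⟩
  have happr : x.appr n = y.appr n := PadicInt.appr_eq_of_norm_sub_le hn.le
  calc ‖φ x - φ y‖ ≤ ‖φ x - φ (x.appr n)‖ + ‖φ y - φ (y.appr n)‖ := by
        rw [happr, norm_sub_rev (φ y)]
        exact norm_sub_le_norm_sub_add_norm_sub _ _ _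
    _ ≤ 2 * (√p * spectralSeminorm p φ * ((p : ℝ)⁻¹ ^ n / (1 - (p : ℝ)⁻¹))) := by
        linarith [norm_sub_appr_le_spectralSeminorm hbdd hφ x n,
          norm_sub_appr_le_spectralSeminorm hbdd hφ y n]
    _ = 2 * p * √p / (p - 1) * spectralSeminorm p φ * ‖x - y‖ := by
        rw [hn]
        field_simp

end Seminorms

/-- The seminorms `L` and `L_D` are equivalent:
`√((p-1)/p)·L(φ) ≥ L_D(φ) ≥ (p-1)/(2p√p)·L(φ)` for every Lipschitz `φ`. -/
theorem stmt18 (p : ℕ) [hp : Fact p.Prime] (φ : ℤ_[p] → ℂ)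
    (hφ : ∃ C : ℝ, ∀ x y : ℤ_[p], ‖φ x - φ y‖ ≤ C * ‖x - y‖) :
    Real.sqrt (((p : ℝ) - 1) / p) * lipSeminorm p φ ≥ spectralSeminorm p φ ∧
      spectralSeminorm p φ ≥ ((p : ℝ) - 1) / (2 * p * Real.sqrt p) * lipSeminorm p φ := by
  have hL : 0 ≤ lipSeminorm p φ := Real.iSup_nonneg fun _ ↦ by positivity
  have hlip := norm_sub_le_lipSeminorm_mul hφ
  have hcont : Continuous φ :=
    (LipschitzWith.of_dist_le' (by simpa only [dist_eq_norm] using hlip)).continuous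
  have hbdd : BddAbove (Set.range (spectralTerm p φ)) :=
    ⟨_, Set.forall_mem_range.mpr (spectralTerm_le hL hlip)⟩
  refine ⟨spectralSeminorm_le hL hlip, ?_⟩
  have hp1 : (1 : ℝ) < p := mod_cast hp.out.one_lt
  have hLD := lipSeminorm_le (norm_sub_le_spectralSeminorm_mul hbdd hcont)
  calc ((p : ℝ) - 1) / (2 * p * √p) * lipSeminorm p φ
      ≤ ((p : ℝ) - 1) / (2 * p * √p) * (2 * p * √p / (p - 1) * spectralSeminorm p φ) := by
        gcongr
    _ = spectralSeminorm p φ := by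
        have : (p : ℝ) - 1 ≠ 0 := (sub_pos.mpr hp1).ne'
        field_simp
end
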